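/- Let H : ℝ^N × ℝ^N → ℝ be C². The time-δ update map φ₁(q,p,x,y) = (q, p − δ·∂H/∂q(q,y), x + δ·∂H/∂p(q,y), y) on the extended phase space ℝ^{4N} preserves the extended symplectic form dq∧dp + dx∧dy. -/

import Mathlib

/-- Extended phase space `ℝ^{4N}` with coordinates `(q, p, x, y)`. -/
abbrev ExtPhase (N : ℕ) :=
  (Fin N → ℝ) × (Fin N → ℝ) × (Fin N → ℝ) × (Fin N → ℝ)

/-- For `H : ℝ^N × ℝ^N → ℝ` of class C², the update map
`φ₁(q,p,x,y) = (q, p − δ·∂H/∂q(q,y), x + δ·∂H/∂p(q,y), y)` preserves the extended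
symplectic form `dq∧dp + dx∧dy`. -/
theorem phi1_symplectic
    (N : ℕ) (H : (Fin N → ℝ) × (Fin N → ℝ) → ℝ) (hH : ContDiff ℝ 2 H) (δ : ℝ)
    (Hq Hp : (Fin N → ℝ) → (Fin N → ℝ) → (Fin N → ℝ))
    (hHq : ∀ a b : Fin N → ℝ, ∀ i : Fin N,
      Hq a b i = fderiv ℝ H (a, b) (Pi.single i 1, 0))
    (hHp : ∀ a b : Fin N → ℝ, ∀ i : Fin N,
      Hp a b i = fderiv ℝ H (a, b) (0, Pi.single i 1))
    (φ : ExtPhase N → ExtPhase N)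
    (hφ : ∀ z : ExtPhase N,
      φ z = (z.1,
             z.2.1 - δ • Hq z.1 z.2.2.2,
             z.2.2.1 + δ • Hp z.1 z.2.2.2,
             z.2.2.2))
    (ω : ExtPhase N → ExtPhase N → ℝ)
    (hω : ∀ v w : ExtPhase N,
      ω v w = (∑ i, v.1 i * w.2.1 i - ∑ i, v.2.1 i * w.1 i)
            + (∑ i, v.2.2.1 i * w.2.2.2 i - ∑ i, v.2.2.2 i * w.2.2.1 i)) :
    ∀ z v w : ExtPhase N, ω (fderiv ℝ φ z v) (fderiv ℝ φ z w) = ω v w := by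
  classical
  have hF : ContDiff ℝ 1 (fderiv ℝ H) := hH.fderiv_right (by norm_num)
  -- projections
  let P1 : ExtPhase N →L[ℝ] (Fin N → ℝ) :=
    ContinuousLinearMap.fst ℝ (Fin N → ℝ) ((Fin N → ℝ) × (Fin N → ℝ) × (Fin N → ℝ))
  let P2 : ExtPhase N →L[ℝ] (Fin N → ℝ) :=
    (ContinuousLinearMap.fst ℝ (Fin N → ℝ) ((Fin N → ℝ) × (Fin N → ℝ))).comp
      (ContinuousLinearMap.snd ℝ (Fin N → ℝ) ((Fin N → ℝ) × (Fin N → ℝ) × (Fin N → ℝ)))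
  let P3 : ExtPhase N →L[ℝ] (Fin N → ℝ) :=
    (ContinuousLinearMap.fst ℝ (Fin N → ℝ) (Fin N → ℝ)).comp
      ((ContinuousLinearMap.snd ℝ (Fin N → ℝ) ((Fin N → ℝ) × (Fin N → ℝ))).comp
        (ContinuousLinearMap.snd ℝ (Fin N → ℝ) ((Fin N → ℝ) × (Fin N → ℝ) × (Fin N → ℝ))))
  let P4 : ExtPhase N →L[ℝ] (Fin N → ℝ) :=
    (ContinuousLinearMap.snd ℝ (Fin N → ℝ) (Fin N → ℝ)).comp
      ((ContinuousLinearMap.snd ℝ (Fin N → ℝ) ((Fin N → ℝ) × (Fin N → ℝ))).comp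
        (ContinuousLinearMap.snd ℝ (Fin N → ℝ) ((Fin N → ℝ) × (Fin N → ℝ) × (Fin N → ℝ))))
  let π : ExtPhase N →L[ℝ] ((Fin N → ℝ) × (Fin N → ℝ)) := P1.prod P4
  have hπ : ∀ z : ExtPhase N, π z = (z.1, z.2.2.2) := fun z => rfl
  -- evaluation maps
  let Λq : (((Fin N → ℝ) × (Fin N → ℝ)) →L[ℝ] ℝ) →L[ℝ] (Fin N → ℝ) :=
    ContinuousLinearMap.pi (fun i =>
      ContinuousLinearMap.apply ℝ ℝ ((Pi.single i 1 : Fin N → ℝ), (0 : Fin N → ℝ)))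
  let Λp : (((Fin N → ℝ) × (Fin N → ℝ)) →L[ℝ] ℝ) →L[ℝ] (Fin N → ℝ) :=
    ContinuousLinearMap.pi (fun i =>
      ContinuousLinearMap.apply ℝ ℝ ((0 : Fin N → ℝ), (Pi.single i 1 : Fin N → ℝ)))
  have hΛq : ∀ (L : ((Fin N → ℝ) × (Fin N → ℝ)) →L[ℝ] ℝ) (i : Fin N),
      Λq L i = L (Pi.single i 1, 0) := fun L i => rfl
  have hΛp : ∀ (L : ((Fin N → ℝ) × (Fin N → ℝ)) →L[ℝ] ℝ) (i : Fin N),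
      Λp L i = L (0, Pi.single i 1) := fun L i => rfl
  -- scalar pull-out for single-coordinate evaluations
  have hsm1 : ∀ (L : ((Fin N → ℝ) × (Fin N → ℝ)) →L[ℝ] ℝ) (i : Fin N) (c : ℝ),
      L ((Pi.single i c : Fin N → ℝ), (0 : Fin N → ℝ)) = c * L (Pi.single i 1, 0) := by
    intro L i c
    have hx : ((Pi.single i c : Fin N → ℝ), (0 : Fin N → ℝ)) =
        c • ((Pi.single i 1 : Fin N → ℝ), (0 : Fin N → ℝ)) := by
      refine Prod.ext ?_ ?_
      · ext j; by_cases h : j = i <;> simp [Pi.single_apply, h]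
      · simp
    rw [hx, map_smul, smul_eq_mul]
  have hsm2 : ∀ (L : ((Fin N → ℝ) × (Fin N → ℝ)) →L[ℝ] ℝ) (i : Fin N) (c : ℝ),
      L ((0 : Fin N → ℝ), (Pi.single i c : Fin N → ℝ)) = c * L (0, Pi.single i 1) := by
    intro L i c
    have hx : ((0 : Fin N → ℝ), (Pi.single i c : Fin N → ℝ)) =
        c • ((0 : Fin N → ℝ), (Pi.single i 1 : Fin N → ℝ)) := by
      refine Prod.ext ?_ ?_
      · simp
      · ext j; by_cases h : j = i <;> simp [Pi.single_apply, h]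
    rw [hx, map_smul, smul_eq_mul]
  -- key evaluation lemmas
  have e1 : ∀ (L : ((Fin N → ℝ) × (Fin N → ℝ)) →L[ℝ] ℝ) (a : Fin N → ℝ),
      ∑ i, a i * L (Pi.single i 1, 0) = L (a, 0) := by
    intro L a
    have h : ((a, 0) : (Fin N → ℝ) × (Fin N → ℝ)) =
        ∑ i, ((Pi.single i (a i) : Fin N → ℝ), (0 : Fin N → ℝ)) := by
      refine Prod.ext ?_ ?_
      · rw [Prod.fst_sum]; simp [Finset.univ_sum_single]
      · rw [Prod.snd_sum]; simp
    rw [h, map_sum]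
    exact (Finset.sum_congr rfl (fun i _ => hsm1 L i (a i))).symm
  have e2 : ∀ (L : ((Fin N → ℝ) × (Fin N → ℝ)) →L[ℝ] ℝ) (a : Fin N → ℝ),
      ∑ i, a i * L (0, Pi.single i 1) = L (0, a) := by
    intro L a
    have h : ((0, a) : (Fin N → ℝ) × (Fin N → ℝ)) =
        ∑ i, ((0 : Fin N → ℝ), (Pi.single i (a i) : Fin N → ℝ)) := by
      refine Prod.ext ?_ ?_
      · rw [Prod.fst_sum]; simp
      · rw [Prod.snd_sum]; simp [Finset.univ_sum_single]
    rw [h, map_sum]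
    exact (Finset.sum_congr rfl (fun i _ => hsm2 L i (a i))).symm
  have hsplit : ∀ (L : ((Fin N → ℝ) × (Fin N → ℝ)) →L[ℝ] ℝ)
      (p : (Fin N → ℝ) × (Fin N → ℝ)), L p = L (p.1, 0) + L (0, p.2) := by
    intro L p
    rw [← map_add]
    congr 1
    exact Prod.ext (by simp) (by simp)
  intro z v w
  -- second derivative at π z
  let S : ((Fin N → ℝ) × (Fin N → ℝ)) →L[ℝ] ((Fin N → ℝ) × (Fin N → ℝ)) →L[ℝ] ℝ :=
    fderiv ℝ (fderiv ℝ H) (π z)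
  have hS : HasFDerivAt (fderiv ℝ H) S (π z) :=
    (hF.differentiable one_ne_zero (π z)).hasFDerivAt
  have hSsymm : ∀ u r : (Fin N → ℝ) × (Fin N → ℝ), S u r = S r u := by
    intro u r
    exact second_derivative_symmetric
      (fun y => ((hH.differentiable (by norm_num)) y).hasFDerivAt) hS u r
  have hFz : HasFDerivAt (fun u : ExtPhase N => fderiv ℝ H (π u)) (S.comp π) z :=
    hS.comp z π.hasFDerivAt
  let D : ExtPhase N →L[ℝ] ExtPhase N :=
    P1.prod ((P2 - δ • (Λq.comp (S.comp π))).prod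
      ((P3 + δ • (Λp.comp (S.comp π))).prod P4))
  have hφeq : φ = fun u : ExtPhase N =>
      (u.1, (u.2.1 - δ • Λq (fderiv ℝ H (π u)),
        (u.2.2.1 + δ • Λp (fderiv ℝ H (π u)), u.2.2.2))) := by
    funext u
    rw [hφ u]
    refine Prod.ext rfl (Prod.ext ?_ (Prod.ext ?_ rfl))
    · have h : Hq u.1 u.2.2.2 = Λq (fderiv ℝ H (π u)) := by
        funext i; rw [hHq, hΛq]; rfl
      simp [h]
    · have h : Hp u.1 u.2.2.2 = Λp (fderiv ℝ H (π u)) := by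
        funext i; rw [hHp, hΛp]; rfl
      simp [h]
  have hDφ : HasFDerivAt φ D z := by
    rw [hφeq]
    refine HasFDerivAt.prodMk ?_ (HasFDerivAt.prodMk ?_ (HasFDerivAt.prodMk ?_ ?_))
    · exact P1.hasFDerivAt
    · exact P2.hasFDerivAt.sub ((Λq.hasFDerivAt.comp z hFz).const_smul δ)
    · exact P3.hasFDerivAt.add ((Λp.hasFDerivAt.comp z hFz).const_smul δ)
    · exact P4.hasFDerivAt
  rw [hDφ.fderiv]
  -- now pure algebra
  have hDv : ∀ u : ExtPhase N, D u =
      (u.1, u.2.1 - δ • Λq (S (π u)), u.2.2.1 + δ • Λp (S (π u)), u.2.2.2) := fun u => rfl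
  rw [hω, hω, hDv v, hDv w]
  simp only [Pi.sub_apply, Pi.add_apply, Pi.smul_apply, smul_eq_mul, hΛq, hΛp]
  have c1 : ∑ i, v.1 i * (w.2.1 i - δ * S (π w) (Pi.single i 1, 0)) =
      ∑ i, v.1 i * w.2.1 i - δ * S (π w) (v.1, 0) := by
    rw [← e1 (S (π w)) v.1, Finset.mul_sum, ← Finset.sum_sub_distrib]
    exact Finset.sum_congr rfl (fun i _ => by ring)
  have c2 : ∑ i, (v.2.1 i - δ * S (π v) (Pi.single i 1, 0)) * w.1 i =
      ∑ i, v.2.1 i * w.1 i - δ * S (π v) (w.1, 0) := by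
    rw [← e1 (S (π v)) w.1, Finset.mul_sum, ← Finset.sum_sub_distrib]
    exact Finset.sum_congr rfl (fun i _ => by ring)
  have c3 : ∑ i, (v.2.2.1 i + δ * S (π v) (0, Pi.single i 1)) * w.2.2.2 i =
      ∑ i, v.2.2.1 i * w.2.2.2 i + δ * S (π v) (0, w.2.2.2) := by
    rw [← e2 (S (π v)) w.2.2.2, Finset.mul_sum, ← Finset.sum_add_distrib]
    exact Finset.sum_congr rfl (fun i _ => by ring)
  have c4 : ∑ i, v.2.2.2 i * (w.2.2.1 i + δ * S (π w) (0, Pi.single i 1)) =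
      ∑ i, v.2.2.2 i * w.2.2.1 i + δ * S (π w) (0, v.2.2.2) := by
    rw [← e2 (S (π w)) v.2.2.2, Finset.mul_sum, ← Finset.sum_add_distrib]
    exact Finset.sum_congr rfl (fun i _ => by ring)
  rw [c1, c2, c3, c4]
  have hkey : S (π v) (w.1, 0) + S (π v) (0, w.2.2.2) =
      S (π w) (v.1, 0) + S (π w) (0, v.2.2.2) := by
    have h1 : S (π v) (π w) = S (π v) (w.1, 0) + S (π v) (0, w.2.2.2) :=
      hsplit (S (π v)) (π w)
    have h2 : S (π w) (π v) = S (π w) (v.1, 0) + S (π w) (0, v.2.2.2) :=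
      hsplit (S (π w)) (π v)
    rw [← h1, ← h2]
    exact hSsymm (π v) (π w)
  linear_combination δ * hkey
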